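/- Let m ≥ 1. The ring homomorphism ℤ[ε,τ,σ,h]/⟨2ε, τσ−1, 𝐟_m, h·𝐟_(m−1), h^(2m)⟩ → ℤ[ε,τ,σ,h,x]/⟨2ε, τσ−1, τ^m·x − 𝐟_(m−1), 𝐟_m, h·x, h^(2m)⟩ induced by the inclusion of polynomial rings sending each of the variables ε, τ, σ, h to the variable of the same name is bijective, i.e. a ring isomorphism. (Proposition 4.9: 𝒜[h]/I_{2m−1} ≅ 𝒜[h,x]/J_{2m−1}.) -/
import Mathlib


/- Context: in `ℤ[ε,τ,σ,h]` (variables `ε = X 0`, `τ = X 1`, `σ = X 2`, `h = X 3`)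
and `ℤ[ε,τ,σ,h,x]` (additionally `x = X 4`), define
`𝐟_m = ∑_{a+2b=m} C(a+b,b)·ε^(2a+1)·τ^b·h^(2b)`.
Statement 17 (Proposition 4.9): the ring homomorphism
`ℤ[ε,τ,σ,h]/⟨2ε, τσ-1, 𝐟_m, h·𝐟_(m-1), h^(2m)⟩ →
 ℤ[ε,τ,σ,h,x]/⟨2ε, τσ-1, τ^m·x - 𝐟_(m-1), 𝐟_m, h·x, h^(2m)⟩`
induced by the variable-preserving inclusion of polynomial rings is bijective. -/

noncomputable section

open MvPolynomial

abbrev A4 : Type := MvPolynomial (Fin 4) ℤ  -- ε, τ, σ, h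
abbrev A5 : Type := MvPolynomial (Fin 5) ℤ  -- ε, τ, σ, h, x

def f4 (m : ℕ) : A4 :=
  ∑ b ∈ Finset.range (m / 2 + 1),
    (Nat.choose (m - b) b : A4) * X 0 ^ (2 * (m - 2 * b) + 1) * X 1 ^ b * X 3 ^ (2 * b)

def f5 (m : ℕ) : A5 :=
  ∑ b ∈ Finset.range (m / 2 + 1),
    (Nat.choose (m - b) b : A5) * X 0 ^ (2 * (m - 2 * b) + 1) * X 1 ^ b * X 3 ^ (2 * b)

def I4 (m : ℕ) : Ideal A4 :=
  Ideal.span {2 * X 0, X 1 * X 2 - 1, f4 m, X 3 * f4 (m - 1), X 3 ^ (2 * m)}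

def I5 (m : ℕ) : Ideal A5 :=
  Ideal.span {2 * X 0, X 1 * X 2 - 1, X 1 ^ m * X 4 - f5 (m - 1), f5 m,
    X 3 * X 4, X 3 ^ (2 * m)}

namespace QuotIsoAux

/-- The substitution sending `ε,τ,σ,h` to themselves and `x` to `σ^m · f4 (m-1)`. -/
def w (m : ℕ) : Fin 5 → A4 := ![X 0, X 1, X 2, X 3, X 2 ^ m * f4 (m - 1)]

def subst (m : ℕ) : A5 →+* A4 := (aeval (R := ℤ) (w m)).toRingHom

lemma w_castSucc (m : ℕ) : (w m) ∘ Fin.castSucc = X := by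
  funext i; fin_cases i <;> rfl

lemma subst_rename (m : ℕ) (p : A4) : subst m (rename Fin.castSucc p) = p := by
  show (aeval (w m)) (rename Fin.castSucc p) = p
  rw [aeval_rename, w_castSucc, aeval_X_left_apply]

lemma rename_f4 (m : ℕ) : rename (R := ℤ) Fin.castSucc (f4 m) = f5 m := by
  have h0 : Fin.castSucc (0 : Fin 4) = (0 : Fin 5) := rfl
  have h1 : Fin.castSucc (1 : Fin 4) = (1 : Fin 5) := rfl
  have h3 : Fin.castSucc (3 : Fin 4) = (3 : Fin 5) := rfl
  simp [f4, f5, map_sum, map_mul, map_pow, map_natCast, rename_X, h0, h1, h3]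

lemma subst_f5 (m k : ℕ) : subst m (f5 k) = f4 k := by
  rw [← rename_f4, subst_rename]

lemma subst_X (m : ℕ) (i : Fin 5) : subst m (X i) = w m i := by
  simp [subst]

lemma I5_le_ker (m : ℕ) :
    I5 m ≤ RingHom.ker ((Ideal.Quotient.mk (I4 m)).comp (subst m)) := by
  rw [I5, Ideal.span_le]
  intro g hg
  simp only [Set.mem_insert_iff, Set.mem_singleton_iff] at hg
  have mem : ∀ q : A4, q ∈ I4 m → (Ideal.Quotient.mk (I4 m)).comp (subst m) g = 0 →
      True := fun _ _ _ => trivial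
  have key : subst m g ∈ I4 m := by
    rcases hg with h | h | h | h | h | h <;> subst h
    · have : subst m (2 * X 0 : A5) = 2 * X 0 := by
        simp [map_mul, map_ofNat, subst_X, w]
      rw [this]
      exact Ideal.subset_span (by simp)
    · have : subst m (X 1 * X 2 - 1 : A5) = X 1 * X 2 - 1 := by
        simp [map_sub, map_mul, map_one, subst_X, w]
      rw [this]
      exact Ideal.subset_span (by simp)
    · have hval : subst m (X 1 ^ m * X 4 - f5 (m - 1)) =
          ((X 1 * X 2) ^ m - 1) * f4 (m - 1) := by
        simp only [map_sub, map_mul, map_pow, subst_X, subst_f5]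
        show X 1 ^ m * (w m 4) - f4 (m-1) = _
        simp only [w]
        show X 1 ^ m * (X 2 ^ m * f4 (m - 1)) - f4 (m - 1) = _
        ring
      rw [hval]
      obtain ⟨c, hc⟩ := sub_dvd_pow_sub_pow (X 1 * X 2 : A4) 1 m
      rw [show ((X 1 * X 2 : A4) ^ m - 1) = (X 1 * X 2) ^ m - 1 ^ m by rw [one_pow], hc]
      have hmem : (X 1 * X 2 - 1 : A4) ∈ I4 m := Ideal.subset_span (by simp)
      exact Ideal.mul_mem_right _ _ (Ideal.mul_mem_right _ _ hmem)
    · rw [subst_f5]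
      exact Ideal.subset_span (by simp [I4])
    · have hval : subst m (X 3 * X 4) = X 2 ^ m * (X 3 * f4 (m - 1)) := by
        simp only [map_mul, subst_X]
        show (w m 3) * (w m 4) = _
        simp only [w]
        show X 3 * (X 2 ^ m * f4 (m - 1)) = _
        ring
      rw [hval]
      have hmem : (X 3 * f4 (m - 1) : A4) ∈ I4 m := Ideal.subset_span (by simp [I4])
      exact Ideal.mul_mem_left _ _ hmem
    · have : subst m (X 3 ^ (2 * m) : A5) = X 3 ^ (2 * m) := by
        simp [map_pow, subst_X, w]
      rw [this]
      exact Ideal.subset_span (by simp)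
  rw [SetLike.mem_coe, RingHom.mem_ker, RingHom.comp_apply, Ideal.Quotient.eq_zero_iff_mem]
  exact key

def Psi (m : ℕ) : (A5 ⧸ I5 m) →+* (A4 ⧸ I4 m) :=
  Ideal.Quotient.lift (I5 m) ((Ideal.Quotient.mk (I4 m)).comp (subst m))
    (fun a ha => I5_le_ker m ha)

set_option synthInstance.maxHeartbeats 1000000 in
lemma Psi_mk (m : ℕ) (p : A5) :
    Psi m (Ideal.Quotient.mk (I5 m) p) = Ideal.Quotient.mk (I4 m) (subst m p) :=
  rfl

lemma x_eq (m : ℕ) :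
    Ideal.Quotient.mk (I5 m) (X 2 ^ m * f5 (m - 1)) = Ideal.Quotient.mk (I5 m) (X 4) := by
  rw [Ideal.Quotient.eq]
  have h1 : (X 1 ^ m * X 4 - f5 (m - 1) : A5) ∈ I5 m := Ideal.subset_span (by simp [I5])
  have h2 : (X 1 * X 2 - 1 : A5) ∈ I5 m := Ideal.subset_span (by simp [I5])
  obtain ⟨c, hc⟩ := sub_dvd_pow_sub_pow (X 1 * X 2 : A5) 1 m
  have h3 : ((X 1 * X 2 : A5) ^ m - 1) ∈ I5 m := by
    rw [show ((X 1 * X 2 : A5) ^ m - 1) = (X 1 * X 2) ^ m - 1 ^ m by rw [one_pow], hc]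
    exact Ideal.mul_mem_right _ _ h2
  have : (X 2 ^ m * f5 (m - 1) - X 4 : A5) =
      (-(X 2 ^ m)) * (X 1 ^ m * X 4 - f5 (m - 1)) + ((X 1 * X 2) ^ m - 1) * X 4 := by
    ring
  rw [this]
  exact add_mem (Ideal.mul_mem_left _ _ h1) (Ideal.mul_mem_right _ _ h3)

end QuotIsoAux

open QuotIsoAux in
theorem quotient_iso (m : ℕ) (hm : 1 ≤ m)
    (Φ : (A4 ⧸ I4 m) →+* (A5 ⧸ I5 m))
    (hΦ : ∀ q : A4, Φ (Ideal.Quotient.mk (I4 m) q)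
        = Ideal.Quotient.mk (I5 m) (rename Fin.castSucc q)) :
    Function.Bijective Φ := by
  have hleft : ∀ a : A4 ⧸ I4 m, Psi m (Φ a) = a := by
    intro a
    obtain ⟨p, rfl⟩ := Ideal.Quotient.mk_surjective a
    rw [hΦ, Psi_mk, subst_rename]
  have hright : ∀ b : A5 ⧸ I5 m, Φ (Psi m b) = b := by
    intro b
    obtain ⟨p, rfl⟩ := Ideal.Quotient.mk_surjective b
    rw [Psi_mk, hΦ]
    -- show mk (rename castSucc (subst m p)) = mk p via ring hom ext
    have : (Ideal.Quotient.mk (I5 m)).comp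
        (((rename (R := ℤ) Fin.castSucc).toRingHom).comp (subst m)) = Ideal.Quotient.mk (I5 m) := by
      apply MvPolynomial.ringHom_ext
      · intro r; simp [subst]
      · intro i
        simp only [RingHom.comp_apply]
        rw [subst_X]
        fin_cases i
        · simp [w]
        · simp [w]
        · simp [w, show Fin.castSucc (2 : Fin 4) = (2 : Fin 5) from rfl]
        · simp [w, show Fin.castSucc (3 : Fin 4) = (3 : Fin 5) from rfl]
        · show Ideal.Quotient.mk (I5 m)
            ((rename (R := ℤ) Fin.castSucc).toRingHom (X 2 ^ m * f4 (m - 1))) = _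
          rw [map_mul, map_pow]
          show Ideal.Quotient.mk (I5 m)
            ((rename Fin.castSucc (X 2 : A4)) ^ m * rename Fin.castSucc (f4 (m - 1))) = _
          rw [rename_f4, rename_X]
          exact x_eq m
    exact DFunLike.congr_fun this p
  exact ⟨Function.LeftInverse.injective hleft,
    Function.RightInverse.surjective hright⟩

end
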